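/- arXiv:1810.02953 — 2 statements merged into one kernel-verified Lean document; each statement's English description precedes it below -/
import Mathlib

section
/- If L is regular and recognized by some acyclic DFA (i.e., L is ℛ-trivial), then for any word w ∈ A* and subalphabet C ⊆ A, the language L ↑_C w is also recognized by an acyclic DFA (ℛ-trivial). -/
open List

variable {A : Type*}

/-- Extract the subword of `x` at positions `K`. -/
def extractW (x : List A) (K : Finset (Fin x.length)) : List A :=
  ((List.finRange x.length).filter (fun i => i ∈ K)).map x.get

/-- `InterpW C u v x` : `x` is a shuffle of `u` and `v` with possible sharing of letters in `C`. -/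
def InterpW (C : Set A) (u v x : List A) : Prop :=
  ∃ K K' : Finset (Fin x.length), K ∪ K' = Finset.univ ∧
    extractW x K = u ∧ extractW x K' = v ∧ ∀ a ∈ extractW x (K ∩ K'), a ∈ C

/-- Interpolation product of languages. -/
def interpL (C : Set A) (L L' : Set (List A)) : Set (List A) :=
  {x | ∃ u ∈ L, ∃ v ∈ L', InterpW C u v x}

/-- Shuffle product of languages. -/
def shuffleL (L L' : Set (List A)) : Set (List A) := interpL ∅ L L'

/-- Simon's congruence: same scattered subwords of length at most `k`. -/
def SimK (k : ℕ) (u v : List A) : Prop :=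
  ∀ w : List A, w.length ≤ k → (w.Sublist u ↔ w.Sublist v)

/-- Piecewise-testability: union of `∼ₖ`-classes for some `k`. -/
def PT (L : Set (List A)) : Prop :=
  ∃ k, ∀ u v : List A, SimK k u v → (u ∈ L ↔ v ∈ L)

/-- A DFA is acyclic when every cycle is a self-loop. -/
def DFA.Acyclic {σ : Type*} (M : DFA A σ) : Prop :=
  ∀ p q (u v : List A), M.evalFrom p u = q → M.evalFrom q v = p → p = q

/-- A language is ℛ-trivial iff it is recognized by a finite acyclic DFA. -/
def RTrivial (L : Set (List A)) : Prop :=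
  ∃ (σ : Type) (_ : Fintype σ) (M : DFA A σ), M.Acyclic ∧ ∀ x, x ∈ M.accepts ↔ x ∈ L


/-!
Run `M` and `w` side by side in a nondeterministic automaton whose states `(p, i)` pair a state of
`M` with a position in `w`; its subset automaton recognizes `L ↑_C w`. Suppose `S →x T →y S` in
the subset automaton. Then `S = S·(xy)^|σ|`, and by induction on the position `i`, every
`(p, i) ∈ S` has `p` fixed by all letters of `xy`: either it comes from a lower position, whose
fixed `M`-component is not moved by the letters attributed to `L`, or from the same position, and
then `p` is the image of a state under `(xy)^|σ|`, which is a fixed point of `xy` because an acyclic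
automaton has no periodic points other than its fixed points. Hence `S ⊆ S·x = T`, and
symmetrically `T ⊆ S`.
-/

section TailFinset

variable {n : ℕ}

def tailFinset (K : Finset (Fin (n + 1))) : Finset (Fin n) :=
  Finset.univ.filter (·.succ ∈ K)

@[simp]
theorem mem_tailFinset {K : Finset (Fin (n + 1))} {i : Fin n} : i ∈ tailFinset K ↔ i.succ ∈ K := by
  simp [tailFinset]

theorem tailFinset_inter (K K' : Finset (Fin (n + 1))) :
    tailFinset (K ∩ K') = tailFinset K ∩ tailFinset K' := by
  ext; simp

theorem union_eq_univ_iff_tailFinset (K K' : Finset (Fin (n + 1))) :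
    K ∪ K' = Finset.univ ↔ (0 ∈ K ∨ 0 ∈ K') ∧ tailFinset K ∪ tailFinset K' = Finset.univ := by
  simp only [Finset.eq_univ_iff_forall, Finset.mem_union, Fin.forall_fin_succ, mem_tailFinset]

theorem exists_tailFinset_eq (P : Prop) (K₀ : Finset (Fin n)) :
    ∃ K : Finset (Fin (n + 1)), (0 ∈ K ↔ P) ∧ tailFinset K = K₀ := by
  classical
  refine ⟨Finset.univ.filter (Fin.cases P (· ∈ K₀)), by simp, ?_⟩
  ext i
  simp

theorem extractW_cons (a : A) (x : List A) (K : Finset (Fin (x.length + 1))) :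
    extractW (a :: x) K = (if 0 ∈ K then [a] else []) ++ extractW x (tailFinset K) := by
  unfold extractW
  show ((finRange (x.length + 1)).filter (· ∈ K)).map (a :: x).get = _
  rw [List.finRange_succ, List.filter_cons, List.filter_map]
  by_cases h : 0 ∈ K <;> simp [h, tailFinset, List.map_map, Function.comp_def]

end TailFinset

section InterpW

variable {C : Set A} {a : A} {u v x : List A}

theorem interpW_nil_iff : InterpW C u v [] ↔ u = [] ∧ v = [] := by
  constructor
  · rintro ⟨K, K', -, rfl, rfl, -⟩
    exact ⟨rfl, rfl⟩
  · rintro ⟨rfl, rfl⟩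
    exact ⟨∅, ∅, by simp, rfl, rfl, by simp [extractW]⟩

theorem interpW_cons_of_interpW {p q : Prop} [Decidable p] [Decidable q] (hpq : p ∨ q)
    (hC : p → q → a ∈ C) (h : InterpW C u v x) :
    InterpW C ((if p then [a] else []) ++ u) ((if q then [a] else []) ++ v) (a :: x) := by
  obtain ⟨K₀, K₀', hcov, rfl, rfl, hK₀⟩ := h
  obtain ⟨K, hK, rfl⟩ := exists_tailFinset_eq p K₀
  obtain ⟨K', hK', rfl⟩ := exists_tailFinset_eq q K₀'
  refine ⟨K, K', (union_eq_univ_iff_tailFinset K K').2 ⟨by rwa [hK, hK'], hcov⟩,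
    by simp [extractW_cons, hK], by simp [extractW_cons, hK'], ?_⟩
  rw [extractW_cons, tailFinset_inter]
  by_cases hp : p <;> by_cases hq : q <;> simp_all

theorem interpW_cons_iff : InterpW C u v (a :: x) ↔
    (∃ u', u = a :: u' ∧ InterpW C u' v x) ∨ (∃ v', v = a :: v' ∧ InterpW C u v' x) ∨
      (a ∈ C ∧ ∃ u' v', u = a :: u' ∧ v = a :: v' ∧ InterpW C u' v' x) := by
  constructor
  · rintro ⟨K, K', hcov, rfl, rfl, hC⟩
    rw [union_eq_univ_iff_tailFinset] at hcov
    have htail : InterpW C (extractW x (tailFinset K)) (extractW x (tailFinset K')) x :=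
      ⟨_, _, hcov.2, rfl, rfl, fun b hb =>
        hC b (by rw [extractW_cons, tailFinset_inter]; exact mem_append_right _ hb)⟩
    by_cases h : 0 ∈ K <;> by_cases h' : 0 ∈ K'
    · refine Or.inr (Or.inr ⟨hC a ?_, _, _, by simp [extractW_cons, h],
        by simp [extractW_cons, h'], htail⟩)
      simp [extractW_cons, h, h']
    · exact Or.inl ⟨extractW x (tailFinset K), by simp [extractW_cons, h],
        by simpa [extractW_cons, h'] using htail⟩
    · exact Or.inr (Or.inl ⟨extractW x (tailFinset K'), by simp [extractW_cons, h'],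
        by simpa [extractW_cons, h] using htail⟩)
    · simp [h, h'] at hcov
  · rintro (⟨u, rfl, h⟩ | ⟨v, rfl, h⟩ | ⟨ha, u, v, rfl, rfl, h⟩)
    · simpa using interpW_cons_of_interpW (p := True) (q := False) (by simp) (by simp) h
    · simpa using interpW_cons_of_interpW (p := False) (q := True) (by simp) (by simp) h
    · simpa using interpW_cons_of_interpW (p := True) (q := True) (by simp) (fun _ _ => ha) h

theorem InterpW.sublist_left (h : InterpW C u v x) : u <+ x := by
  induction x generalizing u v with
  | nil => rw [(interpW_nil_iff.1 h).1]
  | cons a x ih =>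
    rcases interpW_cons_iff.1 h with ⟨u', rfl, h'⟩ | ⟨v', rfl, h'⟩ | ⟨-, u', v', rfl, rfl, h'⟩
    · exact (ih h').cons_cons a
    · exact (ih h').cons a
    · exact (ih h').cons_cons a

theorem interpW_nil_right_iff : InterpW C u [] x ↔ u = x := by
  induction x generalizing u with
  | nil => simp [interpW_nil_iff]
  | cons a x ih => simp [interpW_cons_iff, ih]

end InterpW

theorem Function.isFixedPt_iterate_card {α : Type*} [Fintype α] {f : α → α}
    (hf : Function.periodicPts f ⊆ Function.fixedPoints f) (x : α) :
    Function.IsFixedPt f (f^[Fintype.card α] x) := by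
  obtain ⟨i, j, hij, hfij⟩ := Fintype.exists_ne_map_eq_of_card_lt
    (fun k : Fin (Fintype.card α + 1) => f^[k] x) (by simp)
  wlog hlt : i < j generalizing i j
  · exact this j i hij.symm hfij.symm (lt_of_le_of_ne (not_lt.1 hlt) hij.symm)
  have hfix : Function.IsFixedPt f (f^[i] x) := by
    refine hf (Function.mk_mem_periodicPts (n := j - i) (by omega) ?_)
    show f^[j - i] (f^[i] x) = f^[i] x
    rw [← Function.iterate_add_apply, Nat.sub_add_cancel hlt.le]
    exact hfij.symm
  have hcard : Fintype.card α = (Fintype.card α - i) + i := by omega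
  rw [hcard, Function.iterate_add_apply, (hfix.iterate _).eq]
  exact hfix

namespace DFA

variable {σ : Type*} {M : DFA A σ} {p : σ} {b : A} {x y z : List A}

theorem evalFrom_eq_self_of_forall_step_eq (h : ∀ b ∈ x, M.step p b = p) :
    M.evalFrom p x = p := by
  induction x with
  | nil => rfl
  | cons b x ih =>
    rw [evalFrom_cons, h b mem_cons_self]
    exact ih fun c hc => h c (mem_cons_of_mem _ hc)

theorem evalFrom_flatten_replicate (M : DFA A σ) (p : σ) (n : ℕ) (z : List A) :
    M.evalFrom p (replicate n z).flatten = (M.evalFrom · z)^[n] p := by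
  induction n generalizing p with
  | zero => rfl
  | succ n ih => rw [replicate_succ, flatten_cons, evalFrom_of_append, ih]; rfl

namespace Acyclic

theorem evalFrom_eq_of_append (hM : M.Acyclic) (h : M.evalFrom p (x ++ y) = p) :
    M.evalFrom p x = p :=
  (hM p _ x y rfl (by rwa [← evalFrom_of_append])).symm

theorem step_eq_of_evalFrom_eq (hM : M.Acyclic) (h : M.evalFrom p z = p) (hb : b ∈ z) :
    M.step p b = p := by
  obtain ⟨l₁, l₂, rfl⟩ := append_of_mem hb
  have h₁ : M.evalFrom p l₁ = p := hM.evalFrom_eq_of_append h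
  have h₂ : M.evalFrom p (l₁ ++ [b]) = p := hM.evalFrom_eq_of_append (y := l₂) (by simpa using h)
  rwa [evalFrom_append_singleton, h₁] at h₂

theorem periodicPts_subset_fixedPoints (hM : M.Acyclic) (z : List A) :
    Function.periodicPts (M.evalFrom · z) ⊆ Function.fixedPoints (M.evalFrom · z) := by
  rintro q ⟨n, hn, hq⟩
  obtain ⟨m, rfl⟩ := Nat.exists_eq_add_one_of_ne_zero hn.ne'
  refine (hM q _ z (replicate m z).flatten rfl ?_).symm
  rw [evalFrom_flatten_replicate, ← Function.iterate_succ_apply]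
  exact hq

theorem step_evalFrom_replicate_card [Fintype σ] (hM : M.Acyclic) (hb : b ∈ z) :
    M.step (M.evalFrom p (replicate (Fintype.card σ) z).flatten) b =
      M.evalFrom p (replicate (Fintype.card σ) z).flatten := by
  rw [evalFrom_flatten_replicate]
  exact hM.step_eq_of_evalFrom_eq
    (Function.isFixedPt_iterate_card (hM.periodicPts_subset_fixedPoints z) p) hb

end Acyclic

end DFA

theorem NFA.toDFA_evalFrom {α σ : Type*} (M : NFA α σ) (S : Set σ) (x : List α) :
    M.toDFA.evalFrom S x = M.evalFrom S x :=
  rfl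

section InterpNFA

variable {σ : Type*} {w : List A}

theorem val_add_length_of_drop_eq {i j : Fin (w.length + 1)} {v : List A}
    (h : w.drop i = v ++ w.drop j) : (i : ℕ) + v.length = j := by
  have := congrArg length h
  simp only [length_drop, length_append] at this
  omega

theorem exists_drop_eq_of_drop_eq_cons {i : Fin (w.length + 1)} {a : A} {r : List A}
    (h : w.drop i = a :: r) : ∃ j : Fin (w.length + 1), w.drop j = r := by
  have hi : (i : ℕ) < w.length := by
    by_contra hi
    simp [drop_eq_nil_of_le (not_lt.1 hi)] at h
  exact ⟨⟨i + 1, by omega⟩, by rw [← tail_drop, h]; rfl⟩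

/-- A state `(p, i)` records the state `p` reached by `M` on the letters attributed to the word
of `L`, and the length `i` of the prefix of `w` read so far. -/
def interpNFA (M : DFA A σ) (w : List A) (C : Set A) : NFA A (σ × Fin (w.length + 1)) where
  step s a := {t | t.1 = M.step s.1 a ∧ t.2 = s.2 ∨
    w.drop s.2 = a :: w.drop t.2 ∧ (t.1 = s.1 ∨ a ∈ C ∧ t.1 = M.step s.1 a)}
  start := {(M.start, 0)}
  accept := {s | s.1 ∈ M.accept ∧ s.2 = Fin.last _}

variable {M : DFA A σ} {C : Set A}

theorem mem_evalFrom_interpNFA {s t : σ × Fin (w.length + 1)} {x : List A} :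
    t ∈ (interpNFA M w C).evalFrom {s} x ↔
      ∃ u v, InterpW C u v x ∧ M.evalFrom s.1 u = t.1 ∧ w.drop s.2 = v ++ w.drop t.2 := by
  induction x generalizing s with
  | nil =>
    simp only [NFA.evalFrom_nil, Set.mem_singleton_iff, interpW_nil_iff]
    constructor
    · rintro rfl
      exact ⟨[], [], ⟨rfl, rfl⟩, rfl, rfl⟩
    · rintro ⟨u, v, ⟨rfl, rfl⟩, h₁, h₂⟩
      have := val_add_length_of_drop_eq h₂
      exact Prod.ext h₁.symm (Fin.ext (by simpa using this.symm))
  | cons a x ih =>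
    rw [NFA.evalFrom_cons, NFA.stepSet_singleton, NFA.mem_evalFrom_iff_exists]
    simp only [ih, interpW_cons_iff]
    constructor
    · rintro ⟨⟨q, j⟩, hs | ⟨hj, rfl | ⟨ha, rfl⟩⟩, u, v, huv, hu, hv⟩
      · obtain ⟨rfl, rfl⟩ := hs
        exact ⟨a :: u, v, Or.inl ⟨u, rfl, huv⟩, hu, hv⟩
      · exact ⟨u, a :: v, Or.inr (Or.inl ⟨v, rfl, huv⟩), hu, by rw [hj, hv]; rfl⟩
      · exact ⟨a :: u, a :: v, Or.inr (Or.inr ⟨ha, u, v, rfl, rfl, huv⟩), hu, by rw [hj, hv]; rfl⟩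
    · rintro ⟨u, v, ⟨u, rfl, huv⟩ | ⟨v, rfl, huv⟩ | ⟨ha, u, v, rfl, rfl, huv⟩, hu, hv⟩
      · exact ⟨(M.step s.1 a, s.2), Or.inl ⟨rfl, rfl⟩, u, v, huv, hu, hv⟩
      · obtain ⟨j, hj⟩ := exists_drop_eq_of_drop_eq_cons hv
        exact ⟨(s.1, j), Or.inr ⟨by rw [hv, hj]; rfl, Or.inl rfl⟩, u, v, huv, hu, hj⟩
      · obtain ⟨j, hj⟩ := exists_drop_eq_of_drop_eq_cons hv
        exact ⟨(M.step s.1 a, j), Or.inr ⟨by rw [hv, hj]; rfl, Or.inr ⟨ha, rfl⟩⟩, u, v, huv, hu, hj⟩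

theorem mem_accepts_interpNFA {x : List A} :
    x ∈ (interpNFA M w C).accepts ↔ ∃ u ∈ M.accepts, InterpW C u w x := by
  rw [NFA.mem_accepts]
  constructor
  · rintro ⟨t, ⟨ht, hlast⟩, hx⟩
    obtain ⟨u, v, huv, hu, hv⟩ := mem_evalFrom_interpNFA.1 hx
    simp only [hlast, Fin.val_last, drop_length, append_nil] at hv
    exact ⟨u, show M.evalFrom M.start u ∈ M.accept from hu ▸ ht, by simpa [← hv] using huv⟩
  · rintro ⟨u, hu, huw⟩
    exact ⟨(M.eval u, Fin.last _), ⟨hu, rfl⟩, mem_evalFrom_interpNFA.2 ⟨u, w, huw, rfl, by simp⟩⟩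

end InterpNFA

section Acyclic

variable {σ : Type*} {M : DFA A σ} {w : List A} {C : Set A}

theorem forall_step_eq_of_evalFrom_interpNFA_eq [Fintype σ] (hM : M.Acyclic)
    {S : Set (σ × Fin (w.length + 1))} {z : List A} (hS : (interpNFA M w C).evalFrom S z = S) :
    ∀ s ∈ S, ∀ b ∈ z, M.step s.1 b = s.1 := by
  have hrep : (interpNFA M w C).evalFrom S (replicate (Fintype.card σ) z).flatten = S := by
    rw [← NFA.toDFA_evalFrom, DFA.evalFrom_flatten_replicate]
    exact Function.iterate_fixed hS _
  rintro ⟨p, i⟩ hs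
  induction i using WellFoundedLT.induction generalizing p with
  | ind i ih =>
    rw [← hrep] at hs
    obtain ⟨r, hr, hsr⟩ := NFA.mem_evalFrom_iff_exists.1 hs
    obtain ⟨u, v, huv, hu, hv⟩ := mem_evalFrom_interpNFA.1 hsr
    have hlen := val_add_length_of_drop_eq hv
    cases v with
    | nil =>
      obtain rfl := interpW_nil_right_iff.1 huv
      intro b hb
      rw [← hu]
      exact hM.step_evalFrom_replicate_card hb
    | cons c v =>
      have hr_fix := ih r.2 (by simp at hlen; omega) r.1 hr
      have hu_mem : ∀ b ∈ u, b ∈ z := fun b hb => by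
        obtain ⟨l, hl, hbl⟩ := mem_flatten.1 (huv.sublist_left.subset hb)
        rwa [eq_of_mem_replicate hl] at hbl
      rw [← hu, DFA.evalFrom_eq_self_of_forall_step_eq fun b hb => hr_fix b (hu_mem b hb)]
      exact hr_fix

theorem subset_evalFrom_interpNFA {S : Set (σ × Fin (w.length + 1))} {y : List A}
    (h : ∀ s ∈ S, ∀ b ∈ y, M.step s.1 b = s.1) : S ⊆ (interpNFA M w C).evalFrom S y :=
  fun s hs => NFA.mem_evalFrom_iff_exists.2 ⟨s, hs, mem_evalFrom_interpNFA.2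
    ⟨y, [], interpW_nil_right_iff.2 rfl, DFA.evalFrom_eq_self_of_forall_step_eq (h s hs), rfl⟩⟩

theorem acyclic_toDFA_interpNFA [Fintype σ] (hM : M.Acyclic) :
    (interpNFA M w C).toDFA.Acyclic := by
  have hsub : ∀ {S T x y}, (interpNFA M w C).evalFrom S x = T →
      (interpNFA M w C).evalFrom T y = S → S ⊆ T := fun hx hy =>
    hx ▸ subset_evalFrom_interpNFA fun s hs b hb =>
      forall_step_eq_of_evalFrom_interpNFA_eq hM (by rw [NFA.evalFrom_append, hx, hy]) s hs b
        (mem_append_left _ hb)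
  intro S T x y hx hy
  exact (hsub hx hy).antisymm (hsub hy hx)

end Acyclic

theorem stmt12 {A : Type*} (L : Set (List A)) (hL : RTrivial L)
    (w : List A) (C : Set A) : RTrivial (interpL C L {w}) := by
  obtain ⟨σ, _, M, hM, hML⟩ := hL
  refine ⟨Set (σ × Fin (w.length + 1)), Fintype.ofFinite _, (interpNFA M w C).toDFA,
    acyclic_toDFA_interpNFA hM, fun x => ?_⟩
  rw [NFA.toDFA_correct, mem_accepts_interpNFA]
  simp [interpL, hML]
end

section
/- Let n ≥ 1, A = {a₁,…,aₙ}, ℓ ∈ ℕ, and let u₁,…,uₙ ∈ A* all have length ℓ such that for each position i ∈ {1,…,ℓ}, the letters u₁[i],…,uₙ[i] form a permutation of A. Then (a₁a₂⋯aₙ)^ℓ ∈ u₁ ⧢ u₂ ⧢ ⋯ ⧢ uₙ, and the word (a₁a₂⋯aₙ)^ℓ a₁ is not in u₁ ⧢ ⋯ ⧢ uₙ, while (a₁⋯aₙ)^ℓ a₁ ∼_ℓ (a₁⋯aₙ)^ℓ (both words contain every word of length ≤ ℓ over A as a subword). -/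
/-!
Deal the `i`-th block `a₁⋯aₙ` of `(a₁⋯aₙ)^ℓ` out to the words `u_j`, the letter `a_k` going to the
unique `u_j` whose `i`-th letter is `a_k`; this works because every column is a permutation of
the alphabet, and by induction on `ℓ` it exhibits `(a₁⋯aₙ)^ℓ` as a shuffle of the `u_j`. A shuffle
of the `u_j` has length `nℓ`, which excludes `(a₁⋯aₙ)^ℓ a₁`. Since every block contains every
letter, any word of length `≤ ℓ` embeds into `(a₁⋯aₙ)^ℓ`, one letter per block, hence into both.
-/

open List

variable {A : Type*}

section Interp

variable {C : Set A}

lemma extractW_cons_map_succ (a : A) (x : List A) (K : Finset (Fin x.length)) :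
    extractW (a :: x) (K.map (Fin.succEmb x.length)) = extractW x K := by
  simp [extractW, List.finRange_succ, List.filter_map, Function.comp_def]

lemma extractW_cons_insert_zero (a : A) (x : List A) (K : Finset (Fin x.length)) :
    extractW (a :: x) (insert 0 (K.map (Fin.succEmb x.length))) = a :: extractW x K := by
  simp [extractW, List.finRange_succ, List.filter_map, Function.comp_def, Fin.succ_ne_zero]

theorem InterpW.symm {u v x : List A} (h : InterpW C u v x) : InterpW C v u x := by
  obtain ⟨K, K', hU, hK, hK', hI⟩ := h
  exact ⟨K', K, by rwa [Finset.union_comm], hK', hK, by rwa [Finset.inter_comm]⟩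

theorem InterpW.cons_left {u v x : List A} (a : A) (h : InterpW C u v x) :
    InterpW C (a :: u) v (a :: x) := by
  obtain ⟨K, K', hU, rfl, rfl, hI⟩ := h
  have h0 : (0 : Fin (x.length + 1)) ∉ K'.map (Fin.succEmb x.length) := by simp
  refine ⟨insert 0 (K.map (Fin.succEmb _)), K'.map (Fin.succEmb _), ?_,
    extractW_cons_insert_zero a x K, extractW_cons_map_succ a x K', ?_⟩
  · rw [Finset.insert_union, ← Finset.map_union, hU]
    ext i
    cases i using Fin.cases <;> simp
  · rwa [Finset.insert_inter_of_notMem h0, ← Finset.map_inter, extractW_cons_map_succ]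

theorem InterpW.cons_right {u v x : List A} (a : A) (h : InterpW C u v x) :
    InterpW C u (a :: v) (a :: x) :=
  (h.symm.cons_left a).symm

theorem interpW_nil : InterpW C [] [] [] :=
  ⟨∅, ∅, by simp, rfl, rfl, by simp [extractW]⟩

lemma length_extractW (x : List A) (K : Finset (Fin x.length)) :
    (extractW x K).length = K.card := by
  rw [extractW, List.length_map,
    ← List.toFinset_card_of_nodup ((List.nodup_finRange _).filter _),
    List.toFinset_filter, List.toFinset_finRange]
  simp

theorem InterpW.length_eq {u v x : List A} (h : InterpW ∅ u v x) :
    x.length = u.length + v.length := by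
  obtain ⟨K, K', hU, rfl, rfl, hI⟩ := h
  have hdisj : Disjoint K K' := by
    rw [Finset.disjoint_iff_inter_eq_empty, ← Finset.card_eq_zero, ← length_extractW,
      List.length_eq_zero_iff, List.eq_nil_iff_forall_not_mem]
    exact hI
  rw [length_extractW, length_extractW, ← Finset.card_union_of_disjoint hdisj, hU,
    Finset.card_univ, Fintype.card_fin]

end Interp

def iterShuffle {n : ℕ} (v : Fin n → List A) : Set (List A) :=
  (List.ofFn (fun j => ({v j} : Set (List A)))).foldr shuffleL {[]}

lemma mem_shuffleL_singleton {u x : List A} {L : Set (List A)} :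
    x ∈ shuffleL {u} L ↔ ∃ r ∈ L, InterpW ∅ u r x := by
  simp [shuffleL, interpL]

lemma iterShuffle_succ {n : ℕ} (v : Fin (n + 1) → List A) :
    iterShuffle v = shuffleL {v 0} (iterShuffle (v ∘ Fin.succ)) := by
  simp [iterShuffle, List.ofFn_succ]

lemma nil_mem_iterShuffle (n : ℕ) : [] ∈ iterShuffle (fun _ : Fin n => ([] : List A)) := by
  induction n with
  | zero => simp [iterShuffle]
  | succ n ih => exact iterShuffle_succ _ ▸ mem_shuffleL_singleton.mpr ⟨[], ih, interpW_nil⟩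

lemma length_of_mem_iterShuffle {n : ℕ} {v : Fin n → List A} {x : List A}
    (hx : x ∈ iterShuffle v) : x.length = ∑ j, (v j).length := by
  induction n generalizing x with
  | zero => simp_all [iterShuffle]
  | succ n ih =>
    rw [iterShuffle_succ] at hx
    obtain ⟨r, hr, hI⟩ := mem_shuffleL_singleton.mp hx
    rw [Fin.sum_univ_succ, hI.length_eq, ih hr]
    rfl

lemma cons_mem_iterShuffle_update {n : ℕ} {v : Fin n → List A} {x : List A}
    (hx : x ∈ iterShuffle v) (j : Fin n) (a : A) :
    a :: x ∈ iterShuffle (Function.update v j (a :: v j)) := by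
  induction n generalizing x with
  | zero => exact j.elim0
  | succ n ih =>
    rw [iterShuffle_succ] at hx ⊢
    obtain ⟨r, hr, hI⟩ := mem_shuffleL_singleton.mp hx
    cases j using Fin.cases with
    | zero =>
      have htail : Function.update v 0 (a :: v 0) ∘ Fin.succ = v ∘ Fin.succ :=
        Function.update_comp_eq_of_forall_ne _ _ fun i => Fin.succ_ne_zero i
      rw [htail, Function.update_self]
      exact mem_shuffleL_singleton.mpr ⟨r, hr, hI.cons_left a⟩
    | succ i =>
      rw [Function.update_of_ne (Fin.succ_ne_zero i).symm,
        Function.update_comp_eq_of_injective _ (Fin.succ_injective n)]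
      exact mem_shuffleL_singleton.mpr ⟨a :: r, ih hr i, hI.cons_right a⟩

lemma map_append_mem_iterShuffle {n : ℕ} {v : Fin n → List A} {x : List A}
    (hx : x ∈ iterShuffle v) (f : Fin n → A) {s : List (Fin n)} (hs : s.Nodup) :
    s.map f ++ x ∈ iterShuffle (fun j => if j ∈ s then f j :: v j else v j) := by
  induction s with
  | nil => simpa using hx
  | cons b s ih =>
    obtain ⟨hb, hs⟩ := List.nodup_cons.mp hs
    rw [List.map_cons, List.cons_append]
    convert cons_mem_iterShuffle_update (ih hs) b (f b) using 2
    funext j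
    by_cases hj : j = b
    · subst hj; simp [hb]
    · simp [hj]

lemma ofFn_id_append_mem_iterShuffle {n : ℕ} {v : Fin n → List (Fin n)} {x : List (Fin n)}
    (hx : x ∈ iterShuffle v) {σ : Fin n → Fin n} (hσ : σ.Bijective) :
    List.ofFn id ++ x ∈ iterShuffle (fun j => σ j :: v j) := by
  let e := Equiv.ofBijective σ hσ
  have hround : (List.ofFn e.symm).map σ = List.ofFn id := by
    rw [List.map_ofFn]
    exact congrArg List.ofFn (funext e.apply_symm_apply)
  have hmem := map_append_mem_iterShuffle hx σ (List.nodup_ofFn.mpr e.symm.injective)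
  have hall : ∀ j, j ∈ List.ofFn e.symm := fun j => List.mem_ofFn.mpr (e.symm.surjective j)
  simpa [hround, hall] using hmem

theorem flatten_replicate_mem_iterShuffle {n : ℕ} (ℓ : ℕ) (u : Fin n → List (Fin n))
    (hlen : ∀ j, (u j).length = ℓ)
    (hcol : ∀ i (hi : i < ℓ),
      Function.Bijective (fun j : Fin n => (u j).get ⟨i, by rw [hlen]; exact hi⟩)) :
    (List.replicate ℓ (List.ofFn id)).flatten ∈ iterShuffle u := by
  induction ℓ generalizing u with
  | zero =>
    obtain rfl : u = fun _ => [] := funext fun j => List.length_eq_zero_iff.mp (hlen j)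
    exact nil_mem_iterShuffle n
  | succ ℓ ih =>
    have hne : ∀ j, u j ≠ [] := fun j => List.ne_nil_of_length_eq_add_one (hlen j)
    have htail : (List.replicate ℓ (List.ofFn id)).flatten ∈ iterShuffle fun j => (u j).tail :=
      ih _ (fun j => by simp [hlen j]) fun i hi => by
        simpa [List.getElem_tail] using hcol (i + 1) (by omega)
    have hhead : Function.Bijective fun j => (u j).head (hne j) := by
      simpa [List.head_eq_getElem] using hcol 0 (by omega)
    simpa [List.replicate_succ, List.cons_head_tail] using
      ofFn_id_append_mem_iterShuffle htail hhead

theorem sublist_flatten_replicate {r w : List A} (hr : ∀ a, a ∈ r) {ℓ : ℕ}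
    (hw : w.length ≤ ℓ) : w.Sublist (List.replicate ℓ r).flatten := by
  induction ℓ generalizing w with
  | zero => simp_all
  | succ ℓ ih =>
    cases w with
    | nil => exact List.nil_sublist _
    | cons a w =>
      rw [List.replicate_succ, List.flatten_cons]
      exact (List.singleton_sublist.mpr (hr a)).append (ih (by simpa using hw))

theorem simK_of_sublist {k : ℕ} {u v : List A}
    (hu : ∀ w : List A, w.length ≤ k → w.Sublist u) (huv : u.Sublist v) : SimK k u v :=
  fun w hw => ⟨fun h => h.trans huv, fun _ => hu w hw⟩

theorem stmt19 (n : ℕ) (hn : 1 ≤ n) (ℓ : ℕ) (u : Fin n → List (Fin n))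
    (hlen : ∀ j, (u j).length = ℓ)
    (hperm : ∀ i (hi : i < ℓ),
      Function.Bijective (fun j : Fin n => (u j).get ⟨i, by rw [hlen]; exact hi⟩)) :
    (List.replicate ℓ (List.ofFn (id : Fin n → Fin n))).flatten ∈
      (List.ofFn (fun j => ({u j} : Set (List (Fin n))))).foldr shuffleL {([] : List (Fin n))} ∧
    (List.replicate ℓ (List.ofFn (id : Fin n → Fin n))).flatten ++ [(⟨0, hn⟩ : Fin n)] ∉
      (List.ofFn (fun j => ({u j} : Set (List (Fin n))))).foldr shuffleL {([] : List (Fin n))} ∧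
    (∀ w : List (Fin n), w.length ≤ ℓ →
      w.Sublist ((List.replicate ℓ (List.ofFn (id : Fin n → Fin n))).flatten)) ∧
    SimK ℓ ((List.replicate ℓ (List.ofFn (id : Fin n → Fin n))).flatten)
      ((List.replicate ℓ (List.ofFn (id : Fin n → Fin n))).flatten ++ [(⟨0, hn⟩ : Fin n)]) := by
  have hall : ∀ a : Fin n, a ∈ List.ofFn id := fun a => List.mem_ofFn.mpr ⟨a, rfl⟩
  have hsub : ∀ w : List (Fin n), w.length ≤ ℓ →
      w.Sublist (List.replicate ℓ (List.ofFn (id : Fin n → Fin n))).flatten :=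
    fun _ => sublist_flatten_replicate hall
  refine ⟨flatten_replicate_mem_iterShuffle ℓ u hlen hperm, fun hmem => ?_, hsub,
    simK_of_sublist hsub (List.sublist_append_left _ _)⟩
  have hlength := length_of_mem_iterShuffle hmem
  simp [hlen, List.length_flatten, Nat.mul_comm] at hlength
end
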